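/- Let F₁^{σ₁}, F₂^{σ₂} be turbofunctions with σ₁, σ₂ strictly increasing, and suppose ρ⁺(F₁^{σ₁}, F₂^{σ₂}) = 0. Then their visualizations coincide: F₁ ∘ σ₁⁻¹ = F₂ ∘ σ₂⁻¹ as functions on [0,1]. -/

import Mathlib

open Filter

/-- A càdlàg function on `[0,1]`: right-continuous on `[0,1)`, left limits on `(0,1]`. -/
def Cadlag (f : unitInterval → ℝ) : Prop :=
  (∀ t : unitInterval, (t : ℝ) < 1 →
    Filter.Tendsto f (nhdsWithin t (Set.Ioi t)) (nhds (f t))) ∧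
  (∀ t : unitInterval, 0 < (t : ℝ) →
    ∃ l : ℝ, Filter.Tendsto f (nhdsWithin t (Set.Iio t)) (nhds l))

/-- Increasing homeomorphism of `[0,1]` onto itself. -/
def IsIncHomeo (γ : unitInterval → unitInterval) : Prop :=
  Continuous γ ∧ StrictMono γ ∧ Function.Bijective γ

/-- `Σ`: continuous non-decreasing surjections of `[0,1]` onto itself. -/
def InSigma (σ : unitInterval → unitInterval) : Prop :=
  Continuous σ ∧ Monotone σ ∧ Function.Surjective σ

/-- Skorokhod distance on functions on `[0,1]`. -/
noncomputable def skorokhodDist (f g : unitInterval → ℝ) : ℝ :=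
  sInf { c : ℝ | ∃ γ : unitInterval → unitInterval, IsIncHomeo γ ∧
    (⨆ s : unitInterval, |f s - g (γ s)|) + (⨆ s : unitInterval, |(s : ℝ) - (γ s : ℝ)|) = c }

/-- Extended Skorokhod semi-distance on turbofunctions. -/
noncomputable def rhoPlus (P Q : (unitInterval → ℝ) × (unitInterval → unitInterval)) : ℝ :=
  sInf { c : ℝ | ∃ γ : unitInterval → unitInterval, IsIncHomeo γ ∧
    (⨆ t : unitInterval, |P.1 (γ t) - Q.1 t|) +
    (⨆ t : unitInterval, |(P.2 (γ t) : ℝ) - (Q.2 t : ℝ)|) = c }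

instance : Fact ((0:ℝ) ≤ 1) := ⟨zero_le_one⟩

/-- Right-continuous inverse `σ⁻¹(s) = max {t : σ t ≤ s}` (as a supremum). -/
noncomputable def rcInv (σ : unitInterval → unitInterval) (s : unitInterval) : unitInterval :=
  sSup {t : unitInterval | σ t ≤ s}


/-! Since càdlàg functions are bounded, the suprema in `ρ⁺` are finite, and `ρ⁺ = 0` yields time
changes `γₙ` with `F₁ ∘ γₙ → F₂` and `σ₁ ∘ γₙ → σ₂` uniformly. Then `γₙ → g := σ₁⁻¹ ∘ σ₂`
pointwise, so every `F₂ u` is a cluster value of `F₁` at `g u`. For `u` just right of `t`, the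
point `g u` lies just right of `g t`, where `F₁` is close to `F₁ (g t)` by right-continuity; hence
`F₂ u` is close to `F₁ (g t)`, and right-continuity of `F₂` gives `F₂ t = F₁ (g t)`. At `t = 1`,
where there is no room on the right, `γₙ 1 = 1` gives it directly. -/

open Set Topology

theorem Filter.Tendsto.exists_mem_isBounded_image {α E : Type*} [PseudoMetricSpace E]
    {f : α → E} {l : Filter α} {c : E} (h : Tendsto f l (𝓝 c)) :
    ∃ S ∈ l, Bornology.IsBounded (f '' S) :=
  ⟨f ⁻¹' Metric.ball c 1, h (Metric.ball_mem_nhds c one_pos),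
    Metric.isBounded_ball.subset (image_preimage_subset _ _)⟩

theorem IsCompact.isBounded_image_of_locally {X E : Type*} [TopologicalSpace X]
    [PseudoMetricSpace E] {f : X → E} {K : Set X} (hK : IsCompact K)
    (hloc : ∀ x ∈ K, ∃ S ∈ 𝓝 x, Bornology.IsBounded (f '' S)) : Bornology.IsBounded (f '' K) := by
  refine hK.induction_on (p := fun S => Bornology.IsBounded (f '' S)) (by simp)
    (fun _ _ hST hT => hT.subset (image_mono hST))
    (fun _ _ hS hT => by simpa only [image_union] using hS.union hT) fun x _ => ?_
  obtain ⟨S, hS, hfS⟩ := hloc x ‹_›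
  exact ⟨S, mem_nhdsWithin_of_mem_nhds hS, hfS⟩

namespace Cadlag

variable {f : unitInterval → ℝ}

theorem continuousWithinAt_Ici (hf : Cadlag f) (t : unitInterval) :
    ContinuousWithinAt f (Ici t) t := by
  rcases (le_top : t ≤ ⊤).lt_or_eq with ht | rfl
  · exact continuousWithinAt_Ioi_iff_Ici.mp (hf.1 t ht)
  · simp only [Ici_top, continuousWithinAt_singleton]

theorem exists_tendsto_nhdsLT (hf : Cadlag f) (t : unitInterval) :
    ∃ l, Tendsto f (𝓝[<] t) (𝓝 l) := by
  rcases (bot_le : ⊥ ≤ t).lt_or_eq with ht | rfl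
  · exact hf.2 t ht
  · simp only [Iio_bot, nhdsWithin_empty, tendsto_bot, exists_const]

theorem isBounded_range (hf : Cadlag f) : Bornology.IsBounded (range f) := by
  rw [← image_univ]
  refine isCompact_univ.isBounded_image_of_locally fun t _ => ?_
  obtain ⟨l, hl⟩ := hf.exists_tendsto_nhdsLT t
  obtain ⟨S₁, hS₁, hfS₁⟩ := hl.exists_mem_isBounded_image
  obtain ⟨S₂, hS₂, hfS₂⟩ := (hf.continuousWithinAt_Ici t).tendsto.exists_mem_isBounded_image
  refine ⟨S₁ ∪ S₂, ?_, by simpa only [image_union] using hfS₁.union hfS₂⟩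
  rw [← nhdsLT_sup_nhdsGE]
  exact union_mem_sup hS₁ hS₂

end Cadlag

theorem forall_lt_of_iSup_add_iSup_lt {ι : Type*} {f g : ι → ℝ} {ε : ℝ}
    (hf : BddAbove (range f)) (hg : BddAbove (range g)) (hf₀ : ∀ i, 0 ≤ f i)
    (hg₀ : ∀ i, 0 ≤ g i) (h : (⨆ i, f i) + (⨆ i, g i) < ε) (i : ι) : f i < ε ∧ g i < ε := by
  have hfi := le_ciSup hf i
  have hgi := le_ciSup hg i
  have := Real.iSup_nonneg hf₀
  have := Real.iSup_nonneg hg₀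
  constructor <;> linarith

theorem exists_isIncHomeo_of_rhoPlus_lt {P Q : (unitInterval → ℝ) × (unitInterval → unitInterval)}
    (hP : Bornology.IsBounded (range P.1)) (hQ : Bornology.IsBounded (range Q.1)) {ε : ℝ}
    (h : rhoPlus P Q < ε) :
    ∃ γ, IsIncHomeo γ ∧ ∀ t, |P.1 (γ t) - Q.1 t| < ε ∧ |(P.2 (γ t) : ℝ) - Q.2 t| < ε := by
  obtain ⟨_, ⟨γ, hγ, rfl⟩, hlt⟩ := exists_lt_of_csInf_lt
    (by exact ⟨_, id, ⟨continuous_id, strictMono_id, Function.bijective_id⟩, rfl⟩) h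
  obtain ⟨C₁, hC₁⟩ := hP.exists_norm_le
  obtain ⟨C₂, hC₂⟩ := hQ.exists_norm_le
  refine ⟨γ, hγ, forall_lt_of_iSup_add_iSup_lt ⟨C₁ + C₂, ?_⟩ ⟨1, ?_⟩
    (fun _ => abs_nonneg _) (fun _ => abs_nonneg _) hlt⟩
  · rintro _ ⟨t, rfl⟩
    exact (abs_sub _ _).trans (add_le_add (hC₁ _ (mem_range_self _)) (hC₂ _ (mem_range_self _)))
  · rintro _ ⟨t, rfl⟩
    exact abs_sub_le_of_nonneg_of_le (P.2 _).2.1 (P.2 _).2.2 (Q.2 t).2.1 (Q.2 t).2.2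

theorem exists_seq_tendstoUniformly_of_rhoPlus_eq_zero
    {P Q : (unitInterval → ℝ) × (unitInterval → unitInterval)}
    (hP : Bornology.IsBounded (range P.1)) (hQ : Bornology.IsBounded (range Q.1))
    (h : rhoPlus P Q = 0) :
    ∃ γ : ℕ → unitInterval → unitInterval, (∀ n, IsIncHomeo (γ n)) ∧
      TendstoUniformly (fun n t => P.1 (γ n t)) Q.1 atTop ∧
      TendstoUniformly (fun n t => P.2 (γ n t)) Q.2 atTop := by
  have hpos (n : ℕ) : rhoPlus P Q < 1 / (n + 1) := h ▸ Nat.one_div_pos_of_nat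
  choose γ hγ hclose using fun n => exists_isIncHomeo_of_rhoPlus_lt hP hQ (hpos n)
  have hsmall : ∀ ε > 0, ∀ᶠ n : ℕ in atTop, (1 : ℝ) / (n + 1) < ε := fun ε hε => by
    obtain ⟨N, hN⟩ := exists_nat_one_div_lt hε
    filter_upwards [eventually_ge_atTop N] with n hn
    exact (Nat.one_div_le_one_div hn).trans_lt hN
  refine ⟨γ, hγ, ?_, ?_⟩ <;> refine Metric.tendstoUniformly_iff.mpr fun ε hε => ?_ <;>
    filter_upwards [hsmall ε hε] with n hn t
  · rw [dist_comm, Real.dist_eq]; exact (hclose n t).1.trans hn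
  · rw [dist_comm, Subtype.dist_eq, Real.dist_eq]; exact (hclose n t).2.trans hn

theorem eq_of_eventually_mapClusterPt {X T Y : Type*} [TopologicalSpace X] [TopologicalSpace Y]
    [T3Space Y] {f : X → Y} {F : T → Y} {g : T → X} {s : Set X} {x : X} {c d : Y}
    {l : Filter T} [l.NeBot] (hs : IsOpen s) (hf : Tendsto f (𝓝[s] x) (𝓝 c))
    (hg : Tendsto g l (𝓝[s] x)) (hF : Tendsto F l (𝓝 d))
    (hcl : ∀ᶠ u in l, MapClusterPt (F u) (𝓝 (g u)) f) : d = c := by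
  refine (specializes_iff_pure.mpr ((closed_nhds_basis c).ge_iff.mpr ?_)).eq
  rintro K ⟨hK, hKc⟩
  -- as `s` is open, the control on `f` near `x` within `s` holds on full neighbourhoods
  have hnear : ∀ᶠ y in 𝓝[s] x, ∀ᶠ w in 𝓝 y, f w ∈ K := by
    filter_upwards [eventually_eventually_nhdsWithin.mpr (hf hK), eventually_mem_nhdsWithin]
      with y hy hys
    rwa [← hs.nhdsWithin_eq hys]
  exact hKc.mem_of_tendsto hF <| (hg.eventually hnear).and hcl |>.mono
    fun u ⟨hu, hclu⟩ => hKc.mem_of_mapClusterPt hclu hu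

theorem IsIncHomeo.map_one {γ : unitInterval → unitInterval} (hγ : IsIncHomeo γ) : γ 1 = 1 :=
  (hγ.2.1.orderIsoOfSurjective γ hγ.2.2.2).map_top

theorem OrderIso.tendsto_nhdsGT {α β : Type*} [LinearOrder α] [TopologicalSpace α]
    [OrderTopology α] [LinearOrder β] [TopologicalSpace β] [OrderTopology β] (e : α ≃o β)
    (a : α) : Tendsto e (𝓝[>] a) (𝓝[>] (e a)) :=
  tendsto_nhdsWithin_iff.mpr ⟨e.continuous.continuousWithinAt,
    eventually_mem_nhdsWithin.mono fun _ h => e.strictMono h⟩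

theorem comp_symm_comp_eq_of_rhoPlus_eq_zero {F₁ F₂ : unitInterval → ℝ}
    (hF₁ : Cadlag F₁) (hF₂ : Cadlag F₂) (e₁ e₂ : unitInterval ≃o unitInterval)
    (h : rhoPlus (F₁, e₁) (F₂, e₂) = 0) (t : unitInterval) : F₁ (e₁.symm (e₂ t)) = F₂ t := by
  obtain ⟨γ, hγ, hF, hσ⟩ :=
    exists_seq_tendstoUniformly_of_rhoPlus_eq_zero hF₁.isBounded_range hF₂.isBounded_range h
  set g := e₂.trans e₁.symm
  have hγg (u : unitInterval) : Tendsto (fun n => γ n u) atTop (𝓝 (g u)) := by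
    simpa [g, Function.comp_def] using (e₁.symm.continuous.tendsto _).comp (hσ.tendsto_at u)
  rcases (le_top : t ≤ ⊤).lt_or_eq with ht | rfl
  · have : (𝓝[>] t).NeBot := nhdsGT_neBot_of_exists_gt ⟨⊤, ht⟩
    refine (eq_of_eventually_mapClusterPt isOpen_Ioi (hF₁.1 (g t) ?_) (g.tendsto_nhdsGT t)
      (hF₂.1 t ht) (Eventually.of_forall fun u => ?_)).symm
    · exact g.strictMono.lt_iff_lt.mpr ht |>.trans_eq g.map_top
    · exact ((hF.tendsto_at u).mapClusterPt).of_comp (hγg u)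
  · have hγ₁ (n : ℕ) : γ n ⊤ = ⊤ := (hγ n).map_one
    simpa [hγ₁, tendsto_const_nhds_iff] using hF.tendsto_at ⊤

theorem visualizations_coincide (F₁ F₂ : unitInterval → ℝ)
    (σ₁ σ₂ : unitInterval → unitInterval)
    (hF₁ : Cadlag F₁) (hF₂ : Cadlag F₂) (hσ₁ : InSigma σ₁) (hσ₂ : InSigma σ₂)
    (hs₁ : StrictMono σ₁) (hs₂ : StrictMono σ₂)
    (h : rhoPlus (F₁, σ₁) (F₂, σ₂) = 0) :
    ∀ s : unitInterval, F₁ (Function.invFun σ₁ s) = F₂ (Function.invFun σ₂ s) := by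
  set e₁ := hs₁.orderIsoOfSurjective σ₁ hσ₁.2.2
  set e₂ := hs₂.orderIsoOfSurjective σ₂ hσ₂.2.2
  have hinv (e : unitInterval ≃o unitInterval) : Function.invFun e = e.symm :=
    Function.invFun_eq_of_injective_of_rightInverse e.injective e.apply_symm_apply
  intro s
  rw [show σ₁ = e₁ from rfl, show σ₂ = e₂ from rfl, hinv, hinv]
  simpa using comp_symm_comp_eq_of_rhoPlus_eq_zero hF₁ hF₂ e₁ e₂ h (e₂.symm s)
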